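/- For $\tau\in(0,1]$ and a constant $c := e - e^{1/2} > 0$, consider the sequence $(a_n(\tau))_{n\ge1}$ with $a_n(\tau) = n\int_{1/(2n)}^{1/n} e^{-n(\tau-s)}\,ds$ for $n\ge 1/\tau$ and $a_n(\tau)=0$ otherwise. Then $\sum_{n\ge 1} a_n(\tau)^2 \ge c^2\sum_{n\ge\lceil 1/\tau\rceil} e^{-2\tau n} = c^2\,\frac{e^{-2\tau\lceil 1/\tau\rceil}}{1-e^{-2\tau}}$, and consequently $\sum_{n\ge1}a_n(\tau)^2 \to \infty$ as $\tau\downarrow 0$. -/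
import Mathlib


open Filter intervalIntegral

lemma geom_tail (r : ℝ) (hr0 : 0 ≤ r) (hr1 : r < 1) (N : ℕ) :
    (∑' n : ℕ, (if N ≤ n then r ^ n else 0)) = r ^ N / (1 - r) := by
  have hinj : Function.Injective (fun n : ℕ => n + N) := fun a b h => by simpa using h
  have h0 : Function.support (fun m => if N ≤ m then r ^ m else (0:ℝ)) ⊆
      Set.range (fun n : ℕ => n + N) := by
    intro m hm
    simp only [Function.mem_support, ne_eq, ite_eq_right_iff, not_forall] at hm
    obtain ⟨h, -⟩ := hm
    exact ⟨m - N, show m - N + N = m by omega⟩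
  calc (∑' n : ℕ, (if N ≤ n then r ^ n else 0))
      = ∑' n : ℕ, (if N ≤ n + N then r ^ (n + N) else 0) :=
        (hinj.tsum_eq h0).symm
    _ = ∑' n : ℕ, r ^ n * r ^ N := by
        refine tsum_congr fun n => ?_
        rw [if_pos (by omega), pow_add]
    _ = (1 - r)⁻¹ * r ^ N := by rw [tsum_mul_right, tsum_geometric_of_lt_one hr0 hr1]
    _ = r ^ N / (1 - r) := by ring

lemma a_val (τ : ℝ) (n : ℕ) (hn : 1 ≤ n) :
    (n : ℝ) * ∫ s in (1/(2*(n:ℝ)))..(1/(n:ℝ)), Real.exp (-(n:ℝ) * (τ - s))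
      = (Real.exp 1 - Real.exp (1/2)) * Real.exp (-((n:ℝ) * τ)) := by
  have hn0 : (n:ℝ) ≠ 0 := Nat.cast_ne_zero.mpr (by omega)
  have h1 : ∀ s : ℝ, Real.exp (-(n:ℝ) * (τ - s)) =
      Real.exp (-((n:ℝ) * τ)) * Real.exp ((n:ℝ) * s) := by
    intro s; rw [← Real.exp_add]; ring_nf
  simp only [h1]
  rw [intervalIntegral.integral_const_mul,
    integral_comp_mul_left (fun x => Real.exp x) hn0, integral_exp]
  have e1 : (n:ℝ) * (1/(n:ℝ)) = 1 := by field_simp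
  have e2 : (n:ℝ) * (1/(2*(n:ℝ))) = 1/2 := by field_simp
  rw [e1, e2]
  simp only [smul_eq_mul]
  field_simp

/-- Example 2.13, quantitative blow-up: with `c = e - e^{1/2}` and
`a_n(τ) = n ∫_{1/(2n)}^{1/n} e^{-n(τ-s)} ds` for `n ≥ 1/τ`, `n ≥ 1` (and `0` otherwise),
one has `∑ₙ a_n(τ)² ≥ c² ∑_{n ≥ ⌈1/τ⌉} e^{-2τn} = c² e^{-2τ⌈1/τ⌉}/(1-e^{-2τ})` and
`∑ₙ a_n(τ)² → ∞` as `τ ↓ 0`. -/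
theorem stmt_15 (c : ℝ) (hc : c = Real.exp 1 - Real.exp (1/2))
    (a : ℝ → ℕ → ℝ)
    (ha : ∀ (τ : ℝ) (n : ℕ), a τ n =
      if 1 ≤ n ∧ 1/τ ≤ (n : ℝ) then
        (n : ℝ) * ∫ s in (1/(2*(n:ℝ)))..(1/(n:ℝ)), Real.exp (-(n:ℝ) * (τ - s))
      else 0) :
    (∀ τ : ℝ, τ ∈ Set.Ioc (0:ℝ) 1 →
      (∑' n : ℕ, (a τ n) ^ 2 ≥
          c ^ 2 * ∑' n : ℕ, (if ⌈1/τ⌉₊ ≤ n then Real.exp (-2 * τ * n) else 0)) ∧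
      (∑' n : ℕ, (if ⌈1/τ⌉₊ ≤ n then Real.exp (-2 * τ * n) else 0) =
          Real.exp (-2 * τ * (⌈1/τ⌉₊ : ℝ)) / (1 - Real.exp (-2 * τ)))) ∧
    Tendsto (fun τ : ℝ => ∑' n : ℕ, (a τ n) ^ 2) (nhdsWithin 0 (Set.Ioi 0)) atTop := by
  -- premliminaries
  have hcpos : 0 < c := by
    rw [hc, sub_pos]
    exact Real.exp_lt_exp.mpr (by norm_num)
  -- Key pointwise identity and sum formulas, valid for τ ∈ Ioc 0 1
  have key : ∀ τ ∈ Set.Ioc (0:ℝ) 1,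
      (∑' n : ℕ, (a τ n) ^ 2 =
        c ^ 2 * ∑' n : ℕ, (if ⌈1/τ⌉₊ ≤ n then Real.exp (-2 * τ * n) else 0)) ∧
      (∑' n : ℕ, (if ⌈1/τ⌉₊ ≤ n then Real.exp (-2 * τ * n) else 0) =
          Real.exp (-2 * τ * (⌈1/τ⌉₊ : ℝ)) / (1 - Real.exp (-2 * τ))) := by
    intro τ hτ
    obtain ⟨hτ0, hτ1⟩ := hτ
    have h1τ : (1:ℝ) ≤ 1/τ := by
      rw [le_div_iff₀ hτ0]; linarith
    set N := ⌈1/τ⌉₊ with hN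
    set r := Real.exp (-2 * τ) with hr
    have hr0 : 0 ≤ r := (Real.exp_pos _).le
    have hr1 : r < 1 := Real.exp_lt_one_iff.mpr (by linarith)
    have hexp : ∀ n : ℕ, Real.exp (-2 * τ * n) = r ^ n := by
      intro n
      rw [hr, ← Real.exp_nat_mul]; ring_nf
    have hcond : ∀ n : ℕ, (1 ≤ n ∧ 1/τ ≤ (n:ℝ)) ↔ N ≤ n := by
      intro n
      constructor
      · rintro ⟨-, h2⟩; exact Nat.ceil_le.mpr h2
      · intro h
        have h2 : 1/τ ≤ (n:ℝ) := Nat.ceil_le.mp h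
        refine ⟨?_, h2⟩
        by_contra hn
        push_neg at hn
        interval_cases n
        simp at h2; linarith
    have hpt : ∀ n : ℕ, (a τ n) ^ 2 =
        c ^ 2 * (if N ≤ n then Real.exp (-2 * τ * n) else 0) := by
      intro n
      rw [ha]
      by_cases h : 1 ≤ n ∧ 1/τ ≤ (n:ℝ)
      · rw [if_pos h, if_pos ((hcond n).mp h), a_val τ n h.1, ← hc]
        rw [mul_pow]
        congr 1
        rw [sq, ← Real.exp_add]
        congr 1
        ring
      · rw [if_neg h, if_neg (fun hh => h ((hcond n).mpr hh))]
        ring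
    have hsum1 : ∑' n : ℕ, (a τ n) ^ 2 =
        c ^ 2 * ∑' n : ℕ, (if N ≤ n then Real.exp (-2 * τ * n) else 0) := by
      rw [← tsum_mul_left]
      exact tsum_congr hpt
    have hsum2 : ∑' n : ℕ, (if N ≤ n then Real.exp (-2 * τ * n) else 0) =
        Real.exp (-2 * τ * (N : ℝ)) / (1 - r) := by
      have : ∀ n : ℕ, (if N ≤ n then Real.exp (-2 * τ * n) else (0:ℝ)) =
          (if N ≤ n then r ^ n else 0) := by
        intro n; rw [hexp]
      rw [tsum_congr this, geom_tail r hr0 hr1 N, hexp]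
    exact ⟨hsum1, hsum2⟩
  constructor
  · intro τ hτ
    exact ⟨ge_of_eq (key τ hτ).1, (key τ hτ).2⟩
  · -- limit part
    set K := c ^ 2 * Real.exp (-4) with hK
    have hKpos : 0 < K := by positivity
    have hg : Tendsto (fun τ : ℝ => 1 - Real.exp (-2 * τ)) (nhdsWithin 0 (Set.Ioi 0))
        (nhdsWithin 0 (Set.Ioi 0)) := by
      rw [tendsto_nhdsWithin_iff]
      constructor
      · have : Continuous (fun τ : ℝ => 1 - Real.exp (-2 * τ)) := by continuity
        have h0 := this.tendsto 0
        simp only [mul_zero, Real.exp_zero, sub_self] at h0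
        exact h0.mono_left nhdsWithin_le_nhds
      · filter_upwards [self_mem_nhdsWithin] with τ hτ
        have : Real.exp (-2 * τ) < 1 := Real.exp_lt_one_iff.mpr (by simp at hτ; linarith)
        simpa using this
    have hginv : Tendsto (fun τ : ℝ => (1 - Real.exp (-2 * τ))⁻¹)
        (nhdsWithin 0 (Set.Ioi 0)) atTop := tendsto_inv_nhdsGT_zero.comp hg
    have hKg : Tendsto (fun τ : ℝ => K * (1 - Real.exp (-2 * τ))⁻¹)
        (nhdsWithin 0 (Set.Ioi 0)) atTop := hginv.const_mul_atTop hKpos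
    refine tendsto_atTop_mono' _ ?_ hKg
    filter_upwards [Ioc_mem_nhdsGT_of_mem (Set.left_mem_Ico.mpr one_pos)] with τ hτ
    obtain ⟨hτ0, hτ1⟩ := hτ
    have heq := (key τ ⟨hτ0, hτ1⟩).1
    have heq2 := (key τ ⟨hτ0, hτ1⟩).2
    rw [heq, heq2]
    have hr1 : Real.exp (-2 * τ) < 1 := Real.exp_lt_one_iff.mpr (by linarith)
    have hpos : 0 < 1 - Real.exp (-2 * τ) := by linarith
    have hceil : (⌈1/τ⌉₊ : ℝ) < 1/τ + 1 := Nat.ceil_lt_add_one (by positivity)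
    have hE : Real.exp (-4) ≤ Real.exp (-2 * τ * (⌈1/τ⌉₊ : ℝ)) := by
      apply Real.exp_le_exp.mpr
      have h1 : τ * (⌈1/τ⌉₊ : ℝ) < τ * (1/τ + 1) := by
        exact (mul_lt_mul_iff_right₀ hτ0).mpr hceil
      have h2 : τ * (1/τ + 1) = 1 + τ := by field_simp
      nlinarith
    rw [div_eq_mul_inv, ← mul_assoc]
    have : K ≤ c ^ 2 * Real.exp (-2 * τ * (⌈1/τ⌉₊ : ℝ)) := by
      rw [hK]
      exact mul_le_mul_of_nonneg_left hE (by positivity)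
    exact mul_le_mul_of_nonneg_right this (by positivity)
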